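/- arXiv:alg-geom/9304003 — 4 statements merged into one kernel-verified Lean document; each statement's English description precedes it below -/
import Mathlib

section
/- Let S = k[x_0,...,x_n] be a polynomial ring over a field k with a multiplicative monomial order, and let I ⊆ S be a homogeneous ideal. Then for every degree d, the dimension of the degree-d graded piece of I equals the dimension of the degree-d graded piece of the initial ideal in(I) (the monomial ideal generated by lead terms of all elements of I); i.e., I and in(I) have the same Hilbert function. -/
open MvPolynomial

noncomputable section

/-- The lead (largest) exponent of a polynomial with respect to a linear order on exponents. -/
def leadExp {k : Type*} [Field k] {n : ℕ} (ord : LinearOrder (Fin (n + 1) →₀ ℕ))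
    (f : MvPolynomial (Fin (n + 1)) k) : Fin (n + 1) →₀ ℕ :=
  WithBot.unbotD 0 (@Finset.max _ ord f.support)

/-- The lead coefficient. -/
def leadCoeff {k : Type*} [Field k] {n : ℕ} (ord : LinearOrder (Fin (n + 1) →₀ ℕ))
    (f : MvPolynomial (Fin (n + 1)) k) : k :=
  f.coeff (leadExp ord f)

/-- The lead (initial) term `in(f)` of a polynomial. -/
def leadTerm {k : Type*} [Field k] {n : ℕ} (ord : LinearOrder (Fin (n + 1) →₀ ℕ))
    (f : MvPolynomial (Fin (n + 1)) k) : MvPolynomial (Fin (n + 1)) k :=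
  monomial (leadExp ord f) (leadCoeff ord f)

/-- The initial ideal `in(I)`: the ideal generated by the lead terms of all nonzero
elements of `I`. -/
def initialIdeal {k : Type*} [Field k] {n : ℕ} (ord : LinearOrder (Fin (n + 1) →₀ ℕ))
    (I : Ideal (MvPolynomial (Fin (n + 1)) k)) : Ideal (MvPolynomial (Fin (n + 1)) k) :=
  Ideal.span {g | ∃ f ∈ I, f ≠ 0 ∧ g = leadTerm ord f}

/-- The degree-`d` graded piece of an ideal, as a `k`-subspace of the polynomial ring. -/
def gradedPiece {k : Type*} [Field k] {n : ℕ} (I : Ideal (MvPolynomial (Fin (n + 1)) k))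
    (d : ℕ) : Submodule k (MvPolynomial (Fin (n + 1)) k) :=
  Submodule.restrictScalars k I ⊓ homogeneousSubmodule (Fin (n + 1)) k d

section Aux

variable {k : Type*} [Field k] {n : ℕ} (ord : LinearOrder (Fin (n + 1) →₀ ℕ))

lemma leadExp_mem_support {f : MvPolynomial (Fin (n + 1)) k} (hf : f ≠ 0) :
    leadExp ord f ∈ f.support := by
  have h : f.support.Nonempty := by
    rw [Finset.nonempty_iff_ne_empty]
    simpa [MvPolynomial.support_eq_empty] using hf
  obtain ⟨a, ha⟩ := @Finset.max_of_nonempty _ ord _ h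
  rw [leadExp, ha, WithBot.unbotD_coe]
  exact @Finset.mem_of_max _ ord _ _ ha

lemma le_leadExp {f : MvPolynomial (Fin (n + 1)) k} {A : Fin (n + 1) →₀ ℕ}
    (hA : A ∈ f.support) : ord.le A (leadExp ord f) := by
  have h : f.support.Nonempty := ⟨A, hA⟩
  obtain ⟨a, ha⟩ := @Finset.max_of_nonempty _ ord _ h
  have h2 := @Finset.le_max _ ord _ _ hA
  rw [ha] at h2
  rw [leadExp, ha, WithBot.unbotD_coe]
  exact (@WithBot.coe_le_coe _ A a ord.toLE).mp h2

lemma leadCoeff_ne_zero {f : MvPolynomial (Fin (n + 1)) k} (hf : f ≠ 0) :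
    leadCoeff ord f ≠ 0 := by
  have := leadExp_mem_support ord hf
  rwa [MvPolynomial.mem_support_iff] at this

lemma ord_lt_of_le_of_ne {a b : Fin (n + 1) →₀ ℕ} (h1 : ord.le a b) (h2 : a ≠ b) :
    ord.lt a b :=
  @lt_of_le_of_ne _ (@LinearOrder.toPartialOrder _ ord) a b h1 h2

lemma ord_le_of_lt {a b : Fin (n + 1) →₀ ℕ} (h : ord.lt a b) : ord.le a b :=
  @le_of_lt _ (@PartialOrder.toPreorder _ (@LinearOrder.toPartialOrder _ ord)) a b h

lemma ord_not_le {a b : Fin (n + 1) →₀ ℕ} (h : ord.lt a b) : ¬ ord.le b a :=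
  @not_le_of_gt _ (@PartialOrder.toPreorder _ (@LinearOrder.toPartialOrder _ ord)) a b h

lemma leadExp_eq_of {f : MvPolynomial (Fin (n + 1)) k} {A : Fin (n + 1) →₀ ℕ}
    (hA : A ∈ f.support) (hmax : ∀ B ∈ f.support, ord.le B A) : leadExp ord f = A := by
  have hf : f ≠ 0 := by
    intro h; rw [h] at hA; simp at hA
  exact ord.le_antisymm _ _ (hmax _ (leadExp_mem_support ord hf)) (le_leadExp ord hA)

lemma leadExp_monomial {A : Fin (n + 1) →₀ ℕ} {c : k} (hc : c ≠ 0) :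
    leadExp ord (monomial A c) = A := by
  apply leadExp_eq_of
  · rw [MvPolynomial.mem_support_iff, MvPolynomial.coeff_monomial, if_pos rfl]; exact hc
  · intro B hB
    have hB' := MvPolynomial.support_monomial_subset hB
    rw [Finset.mem_singleton] at hB'
    rw [hB']
    exact ord.le_refl _

lemma leadExp_monomial_mul
    (hmult : ∀ A B C : Fin (n + 1) →₀ ℕ, ord.le A B → ord.le (A + C) (B + C))
    {f : MvPolynomial (Fin (n + 1)) k} (hf : f ≠ 0) {C : Fin (n + 1) →₀ ℕ} {c : k}
    (hc : c ≠ 0) : leadExp ord (monomial C c * f) = C + leadExp ord f := by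
  classical
  apply leadExp_eq_of
  · rw [MvPolynomial.mem_support_iff, MvPolynomial.coeff_monomial_mul]
    exact mul_ne_zero hc (leadCoeff_ne_zero ord hf)
  · intro B hB
    have h2 := MvPolynomial.support_mul (monomial C c) f hB
    rw [Finset.mem_add] at h2
    obtain ⟨u, hu, v, hv, rfl⟩ := h2
    have hu' : u = C := by
      have := MvPolynomial.support_monomial_subset hu
      simpa using this
    rw [hu']
    have hv' := hmult v (leadExp ord f) C (le_leadExp ord hv)
    rw [add_comm C v, add_comm C (leadExp ord f)]
    exact hv'

lemma degree_add' (A B : Fin (n + 1) →₀ ℕ) :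
    Finsupp.degree (A + B) = Finsupp.degree A + Finsupp.degree B := by
  simp [Finsupp.degree_eq_weight_one, map_add]

lemma degree_of_mem_support {f : MvPolynomial (Fin (n + 1)) k} {A : Fin (n + 1) →₀ ℕ} {d : ℕ}
    (hf : f ∈ homogeneousSubmodule (Fin (n + 1)) k d) (hA : A ∈ f.support) :
    Finsupp.degree A = d := by
  rw [mem_homogeneousSubmodule] at hf
  rw [Finsupp.degree_eq_weight_one]
  exact hf (MvPolynomial.mem_support_iff.mp hA)

/-- Key dimension count: the dimension of a subspace of homogeneous polynomials of
degree `d` equals the number of lead exponents of its nonzero elements. -/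
lemma finrank_eq_card_leadExp (V : Submodule k (MvPolynomial (Fin (n + 1)) k)) (d : ℕ)
    (hV : V ≤ homogeneousSubmodule (Fin (n + 1)) k d) :
    Module.finrank k V =
      Nat.card {A : Fin (n + 1) →₀ ℕ | ∃ f ∈ V, f ≠ 0 ∧ leadExp ord f = A} := by
  classical
  set M := {A : Fin (n + 1) →₀ ℕ | ∃ f ∈ V, f ≠ 0 ∧ leadExp ord f = A} with hM
  have hMsub : M ⊆ {A | Finsupp.degree A ≤ d} := by
    rintro A ⟨f, hfV, hf0, rfl⟩
    exact le_of_eq (degree_of_mem_support (hV hfV) (leadExp_mem_support ord hf0))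
  have hMfin : M.Finite := (Finsupp.finite_of_degree_le d).subset hMsub
  haveI : Fintype M := hMfin.fintype
  choose b hbV hb0 hble using fun A : M => A.2
  -- linear independence
  have hli : LinearIndependent k b := by
    rw [linearIndependent_iff']
    intro s g hsum i hi
    by_contra hgi
    set t := s.filter (fun j => g j ≠ 0) with ht
    have htne : t.Nonempty := ⟨i, Finset.mem_filter.mpr ⟨hi, hgi⟩⟩
    set tim := t.image (fun j : M => (j : Fin (n + 1) →₀ ℕ)) with htim
    have htimne : tim.Nonempty := htne.image _
    obtain ⟨m, hmmem, hmax⟩ : ∃ m ∈ tim, ∀ j ∈ tim, ord.le j m :=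
      ⟨@Finset.max' _ ord tim htimne, @Finset.max'_mem _ ord tim htimne,
        fun j hj => @Finset.le_max' _ ord tim j hj⟩
    obtain ⟨i₀, hi₀t, hi₀⟩ := Finset.mem_image.mp hmmem
    have hcoeff := congrArg (MvPolynomial.coeff m) hsum
    rw [MvPolynomial.coeff_sum] at hcoeff
    simp only [MvPolynomial.coeff_smul, smul_eq_mul, MvPolynomial.coeff_zero] at hcoeff
    rw [Finset.sum_eq_single i₀] at hcoeff
    · have hgi₀ : g i₀ ≠ 0 := (Finset.mem_filter.mp hi₀t).2
      have : MvPolynomial.coeff m (b i₀) ≠ 0 := by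
        rw [← hi₀, ← hble i₀]
        exact leadCoeff_ne_zero ord (hb0 i₀)
      exact (mul_ne_zero hgi₀ this) hcoeff
    · intro j hj hji₀
      by_cases hgj : g j = 0
      · rw [hgj, zero_mul]
      · have hjt : j ∈ t := Finset.mem_filter.mpr ⟨hj, hgj⟩
        have hjm : ord.le (j : Fin (n + 1) →₀ ℕ) m :=
          hmax _ (Finset.mem_image_of_mem _ hjt)
        have hne : (j : Fin (n + 1) →₀ ℕ) ≠ m := by
          intro h
          exact hji₀ (Subtype.ext (h.trans hi₀.symm))
        have : MvPolynomial.coeff m (b j) = 0 := by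
          by_contra hc
          have := le_leadExp ord (MvPolynomial.mem_support_iff.mpr hc)
          rw [hble j] at this
          exact absurd (ord.le_antisymm _ _ hjm this) hne
        rw [this, mul_zero]
    · intro h
      exact absurd (Finset.mem_filter.mp hi₀t).1 h
  -- spanning
  have hDfin := Finsupp.finite_of_degree_le (σ := Fin (n + 1)) d
  have hspan : ∀ f ∈ V, f ∈ Submodule.span k (Set.range b) := by
    have key : ∀ N : ℕ, ∀ f, f ∈ V →
        (hDfin.toFinset.filter (fun B => ord.le B (leadExp ord f))).card ≤ N →
        f ∈ Submodule.span k (Set.range b) := by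
      intro N
      induction N with
      | zero =>
        intro f hfV hcard
        by_cases hf0 : f = 0
        · rw [hf0]; exact Submodule.zero_mem _
        · exfalso
          have hmem : leadExp ord f ∈ hDfin.toFinset.filter
              (fun B => ord.le B (leadExp ord f)) := by
            rw [Finset.mem_filter, Set.Finite.mem_toFinset]
            refine ⟨?_, ord.le_refl _⟩
            exact le_of_eq (degree_of_mem_support (hV hfV) (leadExp_mem_support ord hf0))
          have := Finset.card_pos.mpr ⟨_, hmem⟩
          omega
      | succ N ih =>
        intro f hfV hcard
        by_cases hf0 : f = 0
        · rw [hf0]; exact Submodule.zero_mem _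
        set A := leadExp ord f with hA
        have hAM : A ∈ M := ⟨f, hfV, hf0, rfl⟩
        set i : M := ⟨A, hAM⟩ with hi
        set c : k := leadCoeff ord f / leadCoeff ord (b i) with hc
        set g : MvPolynomial (Fin (n + 1)) k := f - c • b i with hg
        have hbi0 : leadCoeff ord (b i) ≠ 0 := leadCoeff_ne_zero ord (hb0 i)
        have hgV : g ∈ V := V.sub_mem hfV (V.smul_mem c (hbV i))
        have hcoeffA : MvPolynomial.coeff A g = 0 := by
          rw [hg, MvPolynomial.coeff_sub, MvPolynomial.coeff_smul, smul_eq_mul]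
          have h1 : MvPolynomial.coeff A (b i) = leadCoeff ord (b i) := by
            rw [leadCoeff]
            congr 1
            rw [hble i]
          rw [h1, hc, div_mul_cancel₀ _ hbi0, leadCoeff, ← hA, sub_self]
        have hfspan : f = g + c • b i := by rw [hg]; ring
        have hbspan : b i ∈ Submodule.span k (Set.range b) :=
          Submodule.subset_span ⟨i, rfl⟩
        by_cases hg0 : g = 0
        · rw [hfspan, hg0, zero_add]
          exact Submodule.smul_mem _ _ hbspan
        -- leadExp g < A
        have hsupg : ∀ B ∈ g.support, ord.le B A := by
          intro B hB
          have := MvPolynomial.support_sub _ _ _ hB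
          rw [Finset.mem_union] at this
          rcases this with h | h
          · exact le_leadExp ord h
          · have hBs : B ∈ (b i).support := by
              rw [MvPolynomial.mem_support_iff] at h ⊢
              intro hz
              rw [MvPolynomial.coeff_smul, hz, smul_zero] at h
              exact h rfl
            have := le_leadExp ord hBs
            rwa [hble i] at this
        have hglt : ord.lt (leadExp ord g) A := by
          have h1 := hsupg _ (leadExp_mem_support ord hg0)
          refine ord_lt_of_le_of_ne ord h1 ?_
          intro h
          have := leadExp_mem_support ord hg0
          rw [h, MvPolynomial.mem_support_iff] at this
          exact this hcoeffA
        have hsubset : hDfin.toFinset.filter (fun B => ord.le B (leadExp ord g)) ⊂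
            hDfin.toFinset.filter (fun B => ord.le B A) := by
          constructor
          · intro B hB
            rw [Finset.mem_filter] at hB ⊢
            exact ⟨hB.1, ord.le_trans _ _ _ hB.2 (ord_le_of_lt ord hglt)⟩
          · intro hcon
            have hAmem : A ∈ hDfin.toFinset.filter (fun B => ord.le B A) := by
              rw [Finset.mem_filter, Set.Finite.mem_toFinset]
              refine ⟨?_, ord.le_refl _⟩
              exact le_of_eq (degree_of_mem_support (hV hfV) (leadExp_mem_support ord hf0))
            have := hcon hAmem
            rw [Finset.mem_filter] at this
            exact absurd this.2 (ord_not_le ord hglt)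
        have hcard' : (hDfin.toFinset.filter (fun B => ord.le B (leadExp ord g))).card ≤ N := by
          have := Finset.card_lt_card hsubset
          omega
        have hgspan := ih g hgV hcard'
        rw [hfspan]
        exact Submodule.add_mem _ hgspan (Submodule.smul_mem _ _ hbspan)
    intro f hfV
    exact key _ f hfV (le_refl _)
  have hVspan : Submodule.span k (Set.range b) = V := by
    apply le_antisymm
    · rw [Submodule.span_le]
      rintro x ⟨A, rfl⟩
      exact hbV A
    · intro f hf
      exact hspan f hf
  rw [← hVspan, finrank_span_eq_card hli, Nat.card_eq_fintype_card]

/-- Every exponent in the support of an element of the initial ideal is the lead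
exponent of a nonzero homogeneous element of `I`. -/
lemma support_initialIdeal
    (hmult : ∀ A B C : Fin (n + 1) →₀ ℕ, ord.le A B → ord.le (A + C) (B + C))
    (I : Ideal (MvPolynomial (Fin (n + 1)) k))
    (hI : ∀ f ∈ I, ∀ d : ℕ, homogeneousComponent d f ∈ I) :
    ∀ g ∈ initialIdeal ord I, ∀ A ∈ g.support,
      ∃ f ∈ I, f ≠ 0 ∧ f ∈ homogeneousSubmodule (Fin (n + 1)) k (Finsupp.degree A) ∧
        leadExp ord f = A := by
  classical
  intro g hg
  refine Submodule.span_induction ?_ ?_ ?_ ?_ hg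
  · rintro x ⟨f₀, hf₀I, hf₀0, rfl⟩
    intro A hA
    have hsupp : A = leadExp ord f₀ := by
      rw [leadTerm] at hA
      have := MvPolynomial.support_monomial_subset hA
      simpa using this
    subst hsupp
    set e := Finsupp.degree (leadExp ord f₀) with he
    set f := homogeneousComponent e f₀ with hf
    have hcoe : MvPolynomial.coeff (leadExp ord f₀) f =
        MvPolynomial.coeff (leadExp ord f₀) f₀ := by
      rw [hf, coeff_homogeneousComponent, if_pos rfl]
    have hfs : leadExp ord f₀ ∈ f.support := by
      rw [MvPolynomial.mem_support_iff, hcoe]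
      exact leadCoeff_ne_zero ord hf₀0
    have hsub : ∀ B ∈ f.support, B ∈ f₀.support := by
      intro B hB
      rw [MvPolynomial.mem_support_iff, hf, coeff_homogeneousComponent] at hB
      rw [MvPolynomial.mem_support_iff]
      intro hz
      rw [hz] at hB
      simp at hB
    refine ⟨f, hI f₀ hf₀I e, ?_, homogeneousComponent_mem e f₀, ?_⟩
    · intro hz
      rw [hz] at hfs
      simp at hfs
    · exact leadExp_eq_of ord hfs (fun B hB => le_leadExp ord (hsub B hB))
  · intro A hA
    simp at hA
  · intro x y hx hy ihx ihy A hA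
    have := MvPolynomial.support_add hA
    rw [Finset.mem_union] at this
    rcases this with h | h
    · exact ihx A h
    · exact ihy A h
  · intro r x hx ihx A hA
    rw [smul_eq_mul] at hA
    have := MvPolynomial.support_mul r x hA
    rw [Finset.mem_add] at this
    obtain ⟨C, hC, B, hB, rfl⟩ := this
    obtain ⟨f, hfI, hf0, hfhom, hfle⟩ := ihx B hB
    refine ⟨monomial C 1 * f, I.mul_mem_left _ hfI, ?_, ?_, ?_⟩
    · exact mul_ne_zero (by simp) hf0
    · rw [mem_homogeneousSubmodule]
      rw [degree_add']
      exact (isHomogeneous_monomial (1 : k) rfl).mul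
        ((mem_homogeneousSubmodule _ _).mp hfhom)
    · rw [leadExp_monomial_mul ord hmult hf0 one_ne_zero, hfle]

end Aux

/-- **Macaulay's theorem.** For a homogeneous ideal `I` in `S = k[x_0, …, x_n]` and a
multiplicative monomial order, `I` and its initial ideal `in(I)` have the same Hilbert
function: for each degree `d`, the degree-`d` graded pieces have the same `k`-dimension. -/
theorem hilbertFunction_initialIdeal {k : Type*} [Field k] {n : ℕ}
    (ord : LinearOrder (Fin (n + 1) →₀ ℕ))
    (hmult : ∀ A B C : Fin (n + 1) →₀ ℕ, ord.le A B → ord.le (A + C) (B + C))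
    (I : Ideal (MvPolynomial (Fin (n + 1)) k))
    (hI : ∀ f ∈ I, ∀ d : ℕ, homogeneousComponent d f ∈ I) (d : ℕ) :
    Module.finrank k (gradedPiece I d) = Module.finrank k (gradedPiece (initialIdeal ord I) d) := by
  classical
  rw [finrank_eq_card_leadExp ord (gradedPiece I d) d inf_le_right,
    finrank_eq_card_leadExp ord (gradedPiece (initialIdeal ord I) d) d inf_le_right]
  have hsets : {A : Fin (n + 1) →₀ ℕ | ∃ f ∈ gradedPiece I d, f ≠ 0 ∧ leadExp ord f = A} =
      {A : Fin (n + 1) →₀ ℕ | ∃ f ∈ gradedPiece (initialIdeal ord I) d, f ≠ 0 ∧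
        leadExp ord f = A} := by
    ext A
    simp only [Set.mem_setOf_eq]
    constructor
    · rintro ⟨f, hf, hf0, rfl⟩
      obtain ⟨hfI, hfhom⟩ := hf
      have hdeg : Finsupp.degree (leadExp ord f) = d :=
        degree_of_mem_support hfhom (leadExp_mem_support ord hf0)
      refine ⟨leadTerm ord f, ⟨?_, ?_⟩, ?_, ?_⟩
      · exact Submodule.subset_span ⟨f, hfI, hf0, rfl⟩
      · show leadTerm ord f ∈ homogeneousSubmodule (Fin (n + 1)) k d
        rw [leadTerm, mem_homogeneousSubmodule]
        exact isHomogeneous_monomial _ hdeg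
      · rw [leadTerm]
        intro h
        exact leadCoeff_ne_zero ord hf0 (MvPolynomial.monomial_eq_zero.mp h)
      · rw [leadTerm]
        exact leadExp_monomial ord (leadCoeff_ne_zero ord hf0)
    · rintro ⟨g, hg, hg0, rfl⟩
      obtain ⟨hgI, hghom⟩ := hg
      have hA : leadExp ord g ∈ g.support := leadExp_mem_support ord hg0
      obtain ⟨f, hfI, hf0, hfhom, hfle⟩ :=
        support_initialIdeal ord hmult I hI g hgI (leadExp ord g) hA
      have hdeg : Finsupp.degree (leadExp ord g) = d :=
        degree_of_mem_support hghom hA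
      rw [hdeg] at hfhom
      exact ⟨f, ⟨hfI, hfhom⟩, hf0, hfle⟩
  rw [hsets]
end
end

section
/- If x_n does not belong to any associated prime of the homogeneous ideal I ⊆ k[x_0,...,x_n] except possibly the irrelevant ideal (x_0,...,x_n), then (I : x_n^∞) equals the saturation sat(I) of I with respect to the irrelevant ideal. -/
open MvPolynomial

noncomputable section

/-- The saturation `(I : x^∞) = {g | x^m g ∈ I for some m}`. -/
def satPow {k : Type*} [Field k] {n : ℕ} (I : Ideal (MvPolynomial (Fin (n + 1)) k))
    (x : MvPolynomial (Fin (n + 1)) k) : Ideal (MvPolynomial (Fin (n + 1)) k) where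
  carrier := {g | ∃ m : ℕ, x ^ m * g ∈ I}
  zero_mem' := ⟨0, by simp⟩
  add_mem' := by
    rintro a b ⟨ma, ha⟩ ⟨mb, hb⟩
    refine ⟨ma + mb, ?_⟩
    have : x ^ (ma + mb) * (a + b)
        = x ^ mb * (x ^ ma * a) + x ^ ma * (x ^ mb * b) := by ring
    rw [this]
    exact Ideal.add_mem I (Ideal.mul_mem_left I _ ha) (Ideal.mul_mem_left I _ hb)
  smul_mem' := by
    rintro c g ⟨m, hm⟩
    refine ⟨m, ?_⟩
    have : x ^ m * (c • g) = c * (x ^ m * g) := by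
      rw [smul_eq_mul]; ring
    rw [this]
    exact Ideal.mul_mem_left I _ hm

/-- The saturation of `I` with respect to the irrelevant ideal `(x_0, …, x_n)`:
`sat I = {g | (x_0, …, x_n)^m · g ⊆ I for some m}`. -/
def sat {k : Type*} [Field k] {n : ℕ} (I : Ideal (MvPolynomial (Fin (n + 1)) k)) :
    Ideal (MvPolynomial (Fin (n + 1)) k) where
  carrier := {g | ∃ m : ℕ,
    ∀ h ∈ (Ideal.span (Set.range X) : Ideal (MvPolynomial (Fin (n + 1)) k)) ^ m, h * g ∈ I}
  zero_mem' := ⟨0, fun h _ => by simp⟩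
  add_mem' := by
    rintro a b ⟨ma, ha⟩ ⟨mb, hb⟩
    refine ⟨ma + mb, fun h hh => ?_⟩
    have hha : h ∈ (Ideal.span (Set.range X) : Ideal (MvPolynomial (Fin (n + 1)) k)) ^ ma :=
      Ideal.pow_le_pow_right (Nat.le_add_right _ _) hh
    have hhb : h ∈ (Ideal.span (Set.range X) : Ideal (MvPolynomial (Fin (n + 1)) k)) ^ mb :=
      Ideal.pow_le_pow_right (Nat.le_add_left _ _) hh
    have : h * (a + b) = h * a + h * b := by ring
    rw [this]
    exact Ideal.add_mem I (ha h hha) (hb h hhb)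
  smul_mem' := by
    rintro c g ⟨m, hm⟩
    refine ⟨m, fun h hh => ?_⟩
    have : h * (c • g) = c * (h * g) := by rw [smul_eq_mul]; ring
    rw [this]
    exact Ideal.mul_mem_left I _ (hm h hh)

section AuxAssoc

variable {R : Type*} [CommRing R] [IsNoetherianRing R]

/-- The radical of a non-redundant primary component of a primary decomposition of `I`
is an associated prime of `R ⧸ I`. -/
lemma isAssociatedPrime_radical_of_primary_decomposition [DecidableEq (Ideal R)]
    {I Q : Ideal R} {t : Finset (Ideal R)} (htI : t.inf id = I) (hQ : Q ∈ t)
    (hprim : ∀ ⦃J⦄, J ∈ t → J.IsPrimary)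
    (hirr : ¬ (t.erase Q).inf id ≤ Q) :
    IsAssociatedPrime Q.radical (R ⧸ I) := by
  classical
  obtain ⟨h, hh1, hh2⟩ := SetLike.not_le_iff_exists.mp hirr
  have hmem : ∀ J ∈ t, J ≠ Q → h ∈ J := by
    intro J hJ hne
    have : (t.erase Q).inf id ≤ id J := Finset.inf_le (Finset.mem_erase.mpr ⟨hne, hJ⟩)
    exact this hh1
  set P := Q.radical with hP
  set J0 := I.colon (Ideal.span {h}) with hJ0
  have hIQ : I ≤ Q := by
    rw [← htI]; exact Finset.inf_le hQ
  have hmemI : ∀ x : R, (∀ J ∈ t, x ∈ J) → x ∈ I := by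
    intro x hx
    rw [← htI]
    exact (Submodule.mem_finsetInf).mpr hx
  have hQJ0 : Q ≤ J0 := by
    intro q hq
    rw [hJ0, Ideal.mem_colon_span_singleton]
    refine hmemI _ fun J hJ => ?_
    by_cases hne : J = Q
    · subst hne; exact J.mul_mem_right _ hq
    · exact J.mul_mem_left _ (hmem J hJ hne)
  have hJ0P : J0 ≤ P := by
    intro y hy
    rw [hJ0, Ideal.mem_colon_span_singleton] at hy
    have hyh : h * y ∈ Q := by rw [mul_comm]; exact hIQ hy
    rcases (Ideal.isPrimary_iff.mp (hprim hQ)).2 hyh with h1 | h1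
    · exact absurd h1 hh2
    · exact h1
  have hradJ0 : J0.radical = P := by
    refine le_antisymm ?_ (Ideal.radical_mono hQJ0)
    have := Ideal.radical_mono hJ0P
    rwa [hP, Ideal.radical_idem] at this
  have hJ0prim : J0.IsPrimary := by
    rw [Ideal.isPrimary_iff]
    constructor
    · intro htop
      have h1 : (1 : R) ∈ J0 := htop ▸ Submodule.mem_top
      rw [hJ0, Ideal.mem_colon_span_singleton, one_mul] at h1
      exact hh2 (hIQ h1)
    · intro x y hxy
      by_cases hyP : y ∈ P
      · right; rwa [hradJ0]
      · left
        rw [hJ0, Ideal.mem_colon_span_singleton] at hxy ⊢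
        refine hmemI _ fun J hJ => ?_
        by_cases hne : J = Q
        · subst hne
          have hxyh : (x * h) * y ∈ J := by
            have : x * y * h ∈ J := hIQ hxy
            convert this using 1; ring
          rcases (Ideal.isPrimary_iff.mp (hprim hQ)).2 hxyh with h1 | h1
          · exact h1
          · exact absurd h1 hyP
        · exact J.mul_mem_left _ (hmem J hJ hne)
  have hass0 : IsAssociatedPrime P (R ⧸ J0) := by
    have hsing := associatedPrimes.eq_singleton_of_isPrimary hJ0prim
    rw [hradJ0] at hsing
    have : P ∈ associatedPrimes R (R ⧸ J0) := by rw [hsing]; rfl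
    exact this
  set ψ : R →ₗ[R] R ⧸ I := LinearMap.toSpanSingleton R _ (Ideal.Quotient.mk I h) with hψ
  have hker : J0 = LinearMap.ker ψ := by
    ext y
    rw [LinearMap.mem_ker, hψ, LinearMap.toSpanSingleton_apply, hJ0,
      Ideal.mem_colon_span_singleton]
    have hsm : y • (Ideal.Quotient.mk I h) = Ideal.Quotient.mk I (y * h) := rfl
    rw [hsm, Ideal.Quotient.eq_zero_iff_mem]
  have hinj : Function.Injective (J0.liftQ ψ hker.le) := by
    rw [← LinearMap.ker_eq_bot]
    exact Submodule.ker_liftQ_eq_bot' _ _ hker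
  exact hass0.map_of_injective (J0.liftQ ψ hker.le) hinj

end AuxAssoc

/-- If `x_n` does not belong to any associated prime of the homogeneous ideal `I` except
possibly the irrelevant ideal `(x_0, …, x_n)`, then `(I : x_n^∞)` equals the saturation
of `I` with respect to the irrelevant ideal. -/


theorem satPow_eq_sat {k : Type*} [Field k] {n : ℕ}
    (I : Ideal (MvPolynomial (Fin (n + 1)) k))
    (hI : ∀ f ∈ I, ∀ d : ℕ, homogeneousComponent d f ∈ I)
    (hass : ∀ p : Ideal (MvPolynomial (Fin (n + 1)) k),
      IsAssociatedPrime p (MvPolynomial (Fin (n + 1)) k ⧸ I) →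
      X (Fin.last n) ∈ p → p = Ideal.span (Set.range X)) :
    satPow I (X (Fin.last n)) = sat I := by
  classical
  have hNoeth : IsNoetherianRing (MvPolynomial (Fin (n + 1)) k) := inferInstance
  set mm : Ideal (MvPolynomial (Fin (n + 1)) k) := Ideal.span (Set.range X) with hmm
  apply le_antisymm
  · -- `(I : x_n^∞) ≤ sat I`
    intro g hg
    obtain ⟨m, hm⟩ := hg
    obtain ⟨t, htI, hprim, hrad, hirr⟩ :=
      Ideal.IsLasker.minimal (Ideal.isLasker (MvPolynomial (Fin (n + 1)) k) (MvPolynomial (Fin (n + 1)) k)) I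
    have key : ∀ J : Ideal (MvPolynomial (Fin (n + 1)) k), ∃ M : ℕ,
        J ∈ t → ∀ h' ∈ mm ^ M, h' * g ∈ J := by
      intro J
      by_cases hJ : J ∈ t
      · have hIJ : I ≤ J := by rw [← htI]; exact Finset.inf_le hJ
        have hgJ : g * X (Fin.last n) ^ m ∈ J := by
          have hx : X (Fin.last n) ^ m * g ∈ J := hIJ hm
          rwa [mul_comm] at hx
        rcases (Ideal.isPrimary_iff.mp (hprim hJ)).2 hgJ with h1 | h1
        · exact ⟨0, fun _ h' _ => J.mul_mem_left h' h1⟩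
        · have hXrad : X (Fin.last n) ∈ J.radical :=
            (Ideal.isPrime_radical (hprim hJ)).mem_of_pow_mem m h1
          have hPrad : J.radical = mm :=
            hass _ (isAssociatedPrime_radical_of_primary_decomposition htI hJ hprim
              (hirr hJ)) hXrad
          have hfg : mm.FG := IsNoetherian.noetherian mm
          obtain ⟨M, hM⟩ := Ideal.exists_pow_le_of_le_radical_of_fg hPrad.ge hfg
          exact ⟨M, fun _ h' hh' => J.mul_mem_right g (hM hh')⟩
      · exact ⟨0, fun h => absurd h hJ⟩
    choose f hf using key
    show ∃ M : ℕ, ∀ h' ∈ (Ideal.span (Set.range X) :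
        Ideal (MvPolynomial (Fin (n + 1)) k)) ^ M, h' * g ∈ I
    refine ⟨t.sup f, fun h' hh' => ?_⟩
    have hmemI : h' * g ∈ t.inf id := Submodule.mem_finsetInf.mpr fun J hJ =>
      hf J hJ h' (Ideal.pow_le_pow_right (Finset.le_sup hJ) hh')
    rwa [htI] at hmemI
  · -- `sat I ≤ (I : x_n^∞)`
    rintro g ⟨m, hm⟩
    show ∃ m : ℕ, X (Fin.last n) ^ m * g ∈ I
    exact ⟨m, hm _ (Ideal.pow_mem_pow (Ideal.subset_span (Set.mem_range_self (Fin.last n))) m)⟩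
end
end

section
/- Let in(f_1),...,in(f_r) be nonzero monomial terms in S = k[x_0,...,x_n]. The kernel K of the map in(F): S^r → S, e_i ↦ in(f_i), is generated by the elements t_{ij} = b x^B e_i − c x^C e_j for i < j, where x^A = b x^B in(f_i) = c x^C in(f_j) is the least common multiple of in(f_i) and in(f_j). -/
open MvPolynomial
open scoped Classical

noncomputable section
namespace SyzAux
variable {k : Type*} [Field k] {n : ℕ} {r : ℕ}
local notation "S" => MvPolynomial (Fin (n + 1)) k
variable (a : Fin r → k) (A : Fin r → (Fin (n + 1) →₀ ℕ))

def T : Set (Fin r → S) :=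
  {v | ∃ i j : Fin r, i < j ∧
    v = Pi.single i (monomial ((A i ⊔ A j) - A i) ((a i)⁻¹))
      - Pi.single j (monomial ((A i ⊔ A j) - A j) ((a j)⁻¹))}

lemma el_mem (ha : ∀ i, a i ≠ 0) {i j : Fin r} (hij : i ≠ j) :
    (Pi.single i (monomial ((A i ⊔ A j) - A i) ((a i)⁻¹))
      - Pi.single j (monomial ((A i ⊔ A j) - A j) ((a j)⁻¹)) : Fin r → S)
    ∈ Submodule.span S (T a A) := by
  rcases lt_or_gt_of_ne hij with h | h
  · exact Submodule.subset_span ⟨i, j, h, rfl⟩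
  · have : (Pi.single i (monomial ((A i ⊔ A j) - A i) ((a i)⁻¹))
      - Pi.single j (monomial ((A i ⊔ A j) - A j) ((a j)⁻¹)) : Fin r → S)
      = -(Pi.single j (monomial ((A j ⊔ A i) - A j) ((a j)⁻¹))
      - Pi.single i (monomial ((A j ⊔ A i) - A i) ((a i)⁻¹))) := by
      rw [sup_comm (A j) (A i)]; abel
    rw [this]
    exact neg_mem (Submodule.subset_span ⟨j, i, h, rfl⟩)

lemma key (ha : ∀ i, a i ≠ 0) (D : Fin (n + 1) →₀ ℕ) :
    ∀ (m : ℕ) (c : Fin r → k),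
      (Finset.univ.filter fun i => c i ≠ 0).card ≤ m →
      (∑ i, c i * a i) = 0 → (∀ i, c i ≠ 0 → A i ≤ D) →
      (fun i => (monomial (D - A i) (c i) : S)) ∈ Submodule.span S (T a A) := by
  intro m
  induction m with
  | zero =>
    intro c hcard _ _
    have hc : ∀ i, c i = 0 := by
      intro i
      by_contra h
      have : i ∈ Finset.univ.filter fun i => c i ≠ 0 := by simp [h]
      have := Finset.card_pos.mpr ⟨i, this⟩
      omega
    have : (fun i => (monomial (D - A i) (c i) : S)) = 0 := by
      funext i; simp [hc i]
    rw [this]; exact zero_mem _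
  | succ m ih =>
    intro c hcard hsum hle
    by_cases hE : ∀ i, c i = 0
    · have : (fun i => (monomial (D - A i) (c i) : S)) = 0 := by
        funext i; simp [hE i]
      rw [this]; exact zero_mem _
    push_neg at hE
    obtain ⟨i, hi⟩ := hE
    -- find another index j ≠ i with c j ≠ 0
    have hj : ∃ j, j ≠ i ∧ c j ≠ 0 := by
      by_contra h
      push_neg at h
      have : ∑ l, c l * a l = c i * a i := by
        apply Finset.sum_eq_single
        · intro b _ hb
          rw [h b hb]; ring
        · simp
      rw [hsum] at this
      exact (mul_ne_zero hi (ha i)) this.symm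
    obtain ⟨j, hji, hj⟩ := hj
    set c' : Fin r → k :=
      Function.update (Function.update c j (c j + c i * a i * (a j)⁻¹)) i 0 with hc'
    have hc'i : c' i = 0 := by simp [hc']
    have hc'j : c' j = c j + c i * a i * (a j)⁻¹ := by
      simp [hc', Function.update_apply, hji]
    have hc'other : ∀ l, l ≠ i → l ≠ j → c' l = c l := by
      intro l h1 h2
      simp [hc', Function.update_apply, h1, h2]
    -- support shrinks
    have hsubset : (Finset.univ.filter fun l => c' l ≠ 0)
        ⊆ (Finset.univ.filter fun l => c l ≠ 0).erase i := by
      intro l hl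
      simp only [Finset.mem_filter, Finset.mem_univ, true_and] at hl
      rcases eq_or_ne l i with rfl | h1
      · exact absurd hc'i hl
      rcases eq_or_ne l j with rfl | h2
      · exact Finset.mem_erase.mpr ⟨h1, by simp [hj]⟩
      · exact Finset.mem_erase.mpr ⟨h1, by simp [← hc'other l h1 h2, hl]⟩
    have hcard' : (Finset.univ.filter fun l => c' l ≠ 0).card ≤ m := by
      have h1 := Finset.card_le_card hsubset
      have h2 : ((Finset.univ.filter fun l => c l ≠ 0).erase i).card
          < (Finset.univ.filter fun l => c l ≠ 0).card :=
        Finset.card_erase_lt_of_mem (by simp [hi])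
      omega
    have hsum' : ∑ l, c' l * a l = 0 := by
      have hstep : ∀ l, c' l * a l = c l * a l
          + (if l = i then -(c i * a i) else 0) + (if l = j then c i * a i else 0) := by
        intro l
        rcases eq_or_ne l i with rfl | h1
        · rw [hc'i]
          simp [hji.symm]
        rcases eq_or_ne l j with rfl | h2
        · rw [hc'j, if_neg h1, if_pos rfl, add_mul, inv_mul_cancel_right₀ (ha _), add_zero]
        · rw [hc'other l h1 h2]; simp [h1, h2]
      rw [Finset.sum_congr rfl (fun l _ => hstep l)]
      rw [Finset.sum_add_distrib, Finset.sum_add_distrib]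
      simp [hsum]
    have hle' : ∀ l, c' l ≠ 0 → A l ≤ D := by
      intro l hl
      have := hsubset (Finset.mem_filter.mpr ⟨Finset.mem_univ l, hl⟩)
      rw [Finset.mem_erase] at this
      exact hle l (by simpa using this.2)
    have hmem' := ih c' hcard' hsum' hle'
    -- decomposition
    have hAiD : A i ≤ D := hle i hi
    have hAjD : A j ≤ D := hle j hj
    have hsD : A i ⊔ A j ≤ D := sup_le hAiD hAjD
    have hdecomp : (fun l => (monomial (D - A l) (c l) : S))
        = (fun l => (monomial (D - A l) (c' l) : S))
        + (monomial (D - (A i ⊔ A j)) (c i * a i) : S) •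
          (Pi.single i (monomial ((A i ⊔ A j) - A i) ((a i)⁻¹))
            - Pi.single j (monomial ((A i ⊔ A j) - A j) ((a j)⁻¹)) : Fin r → S) := by
      funext l
      simp only [Pi.add_apply, Pi.smul_apply, Pi.sub_apply, smul_eq_mul]
      rcases eq_or_ne l i with rfl | h1
      · rw [hc'i, Pi.single_eq_same, Pi.single_eq_of_ne (Ne.symm hji)]
        rw [mul_sub, mul_zero, sub_zero, monomial_mul,
          tsub_add_tsub_cancel hsD le_sup_left]
        rw [mul_assoc, mul_inv_cancel₀ (ha l), mul_one]
        simp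
      rcases eq_or_ne l j with rfl | h2
      · rw [hc'j, Pi.single_eq_of_ne h1, Pi.single_eq_same, zero_sub, mul_neg,
          monomial_mul, tsub_add_tsub_cancel hsD le_sup_right, map_add, mul_assoc]
        ring
      · rw [hc'other l h1 h2, Pi.single_eq_of_ne h1, Pi.single_eq_of_ne h2]
        simp
    rw [hdecomp]
    exact add_mem hmem' (Submodule.smul_mem _ _ (el_mem a A ha hji.symm))


def Fmap : (Fin r → S) →ₗ[S] S :=
  ∑ i : Fin r, (LinearMap.proj i :
      (Fin r → S) →ₗ[S] S).smulRight (monomial (A i) (a i))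

lemma Fmap_apply (v : Fin r → S) :
    Fmap a A v = ∑ i : Fin r, v i * monomial (A i) (a i) := by
  simp [Fmap, LinearMap.sum_apply, smul_eq_mul]

lemma zero_of_empty (v : Fin r → S)
    (h : (Finset.univ.biUnion fun i => (v i).support.image (· + A i)) = ∅) : v = 0 := by
  funext i
  have h1 : ((v i).support.image (· + A i)) = ∅ :=
    Finset.subset_empty.mp (h ▸ Finset.subset_biUnion_of_mem (fun j => (v j).support.image (· + A j)) (Finset.mem_univ i))
  have h2 : (v i).support = ∅ := Finset.image_eq_empty.mp h1
  exact MvPolynomial.support_eq_empty.mp h2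

lemma main (ha : ∀ i, a i ≠ 0) :
    ∀ (N : ℕ) (v : Fin r → S),
      (Finset.univ.biUnion fun i => (v i).support.image (· + A i)).card ≤ N →
      Fmap a A v = 0 → v ∈ Submodule.span S (T a A) := by
  intro N
  induction N with
  | zero =>
    intro v hcard _
    rw [zero_of_empty A v (Finset.card_eq_zero.mp (Nat.le_zero.mp hcard))]
    exact zero_mem _
  | succ N ih =>
    intro v hcard hv
    by_cases h0 : (Finset.univ.biUnion fun i => (v i).support.image (· + A i)) = ∅
    · rw [zero_of_empty A v h0]; exact zero_mem _
    obtain ⟨D, hD⟩ := Finset.nonempty_iff_ne_empty.mpr h0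
    set c : Fin r → k := fun i => if A i ≤ D then coeff (D - A i) (v i) else 0 with hc
    have hsum : ∑ i, c i * a i = 0 := by
      calc ∑ i, c i * a i = ∑ i, coeff D (v i * monomial (A i) (a i)) := by
            refine Finset.sum_congr rfl fun i _ => ?_
            rw [coeff_mul_monomial']
            by_cases h : A i ≤ D <;> simp [hc, h]
        _ = coeff D (Fmap a A v) := by rw [Fmap_apply, coeff_sum]
        _ = 0 := by rw [hv, coeff_zero]
    set w : Fin r → S := fun i => monomial (D - A i) (c i) with hwdef
    have hcle : ∀ i, c i ≠ 0 → A i ≤ D := by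
      intro i hci
      by_contra h
      exact hci (by simp [hc, h])
    have hw : w ∈ Submodule.span S (T a A) := key a A ha D _ c le_rfl hsum hcle
    have hFw : Fmap a A w = 0 := by
      rw [Fmap_apply]
      have hterm : ∀ i, w i * monomial (A i) (a i) = monomial D (c i * a i) := by
        intro i
        by_cases h : A i ≤ D
        · show (monomial (D - A i) (c i) : S) * monomial (A i) (a i) = _
          rw [monomial_mul, tsub_add_cancel_of_le h]
        · have hci : c i = 0 := by simp [hc, h]
          show (monomial (D - A i) (c i) : S) * monomial (A i) (a i) = _
          rw [hci]; simp
      rw [Finset.sum_congr rfl fun i _ => hterm i, ← map_sum, hsum, map_zero]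
    have hsub : (Finset.univ.biUnion fun i => ((v - w) i).support.image (· + A i))
        ⊆ (Finset.univ.biUnion fun i => (v i).support.image (· + A i)).erase D := by
      intro E hE
      simp only [Finset.mem_biUnion, Finset.mem_image, Finset.mem_univ, true_and] at hE
      obtain ⟨i, F, hF, rfl⟩ := hE
      have hne : F + A i ≠ D := by
        intro hFD
        have hAiD : A i ≤ D := hFD ▸ le_add_self
        have hF' : F = D - A i := by rw [← hFD, add_tsub_cancel_right]
        apply MvPolynomial.mem_support_iff.mp hF
        rw [Pi.sub_apply, coeff_sub, hF']
        have hwD : coeff (D - A i) (w i) = c i := by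
          show coeff (D - A i) (monomial (D - A i) (c i)) = c i
          rw [coeff_monomial, if_pos rfl]
        rw [hwD, hc]
        simp only [if_pos hAiD, sub_self]
      refine Finset.mem_erase.mpr ⟨hne, ?_⟩
      simp only [Finset.mem_biUnion, Finset.mem_image, Finset.mem_univ, true_and]
      refine ⟨i, F, ?_, rfl⟩
      rw [MvPolynomial.mem_support_iff] at hF ⊢
      have hwF : coeff F (w i) = 0 := by
        by_cases h : A i ≤ D
        · have hFne : (D - A i) ≠ F := by
            intro hEq
            exact hne (by rw [← hEq, tsub_add_cancel_of_le h])
          show coeff F (monomial (D - A i) (c i)) = 0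
          rw [coeff_monomial, if_neg hFne]
        · have hci : c i = 0 := by simp [hc, h]
          show coeff F (monomial (D - A i) (c i)) = 0
          rw [hci, map_zero, coeff_zero]
      intro hvF
      apply hF
      rw [Pi.sub_apply, coeff_sub, hwF, sub_zero, hvF]
    have hcard' :
        (Finset.univ.biUnion fun i => ((v - w) i).support.image (· + A i)).card ≤ N := by
      have h1 := Finset.card_le_card hsub
      have h2 := Finset.card_erase_lt_of_mem hD
      omega
    have hvw := ih (v - w) hcard' (by rw [map_sub, hv, hFw, sub_zero])
    have hdecomp : v = (v - w) + w := by abel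
    rw [hdecomp]
    exact add_mem hvw hw

end SyzAux
end


noncomputable section

open SyzAux in
/-- The module of syzygies of the nonzero terms `in(f_i) = a_i x^{A_i}`, i.e. the kernel
of the map `in(F) : S^r → S`, `e_i ↦ a_i x^{A_i}`, is generated by the elements
`t_{ij} = b x^B e_i - c x^C e_j` for `i < j`, where
`x^{A_i ⊔ A_j} = b x^B · a_i x^{A_i} = c x^C · a_j x^{A_j}` is the least common multiple
of the two monomials (so `b = a_i⁻¹`, `B = (A_i ⊔ A_j) - A_i`, etc.). -/
theorem syzygies_of_terms {k : Type*} [Field k] {n : ℕ}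
    (r : ℕ) (a : Fin r → k) (ha : ∀ i, a i ≠ 0) (A : Fin r → (Fin (n + 1) →₀ ℕ)) :
    LinearMap.ker
      (∑ i : Fin r, (LinearMap.proj i :
          (Fin r → MvPolynomial (Fin (n + 1)) k) →ₗ[MvPolynomial (Fin (n + 1)) k]
            MvPolynomial (Fin (n + 1)) k).smulRight (monomial (A i) (a i)))
      = Submodule.span (MvPolynomial (Fin (n + 1)) k)
          {v | ∃ i j : Fin r, i < j ∧
            v = Pi.single i (monomial ((A i ⊔ A j) - A i) ((a i)⁻¹))
              - Pi.single j (monomial ((A i ⊔ A j) - A j) ((a j)⁻¹))} := by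
  have hker : LinearMap.ker (Fmap a A) = Submodule.span _ (T a A) := by
    apply le_antisymm
    · intro v hv
      exact main a A ha _ v le_rfl (LinearMap.mem_ker.mp hv)
    · rw [Submodule.span_le]
      rintro v ⟨i, j, hij, rfl⟩
      rw [SetLike.mem_coe, LinearMap.mem_ker, map_sub]
      have hs : ∀ (l : Fin r) (p : MvPolynomial (Fin (n+1)) k),
          Fmap a A (Pi.single l p) = p * monomial (A l) (a l) := by
        intro l p
        rw [Fmap_apply]
        rw [Finset.sum_eq_single l]
        · simp
        · intro b _ hb; simp [Pi.single_apply, hb]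
        · simp
      rw [hs, hs, monomial_mul, monomial_mul,
        tsub_add_cancel_of_le (le_sup_left : A i ≤ A i ⊔ A j),
        tsub_add_cancel_of_le (le_sup_right : A j ≤ A i ⊔ A j),
        inv_mul_cancel₀ (ha i), inv_mul_cancel₀ (ha j), sub_self]
  exact hker

end
end

section
/- (Degree-bounded ideal membership from multiplicity at infinity) Let I^A ⊆ k[x_1,...,x_n] be generated by f_1,...,f_k, let f_i^h ∈ k[x_0,...,x_n] be their homogenizations with respect to the variable x_0, and let I^H = (f_1^h,...,f_k^h). Suppose g ∈ I^A and m is a nonnegative integer such that x_0^m · g^h ∈ I^H, where g^h is the homogenization of g. Then g = Σ a_i f_i with deg(a_i) ≤ m + deg(g) for all i. -/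
open MvPolynomial

noncomputable section

/-- The homogenization of `f ∈ k[x_1, …, x_n]` with respect to a new variable `x_0`:
each monomial `x^A` of `f` is multiplied by `x_0^{deg f - |A|}`, producing a homogeneous
polynomial of degree `deg f` in `k[x_0, x_1, …, x_n]`. -/
def homogenize {k : Type*} [Field k] {n : ℕ} (f : MvPolynomial (Fin n) k) :
    MvPolynomial (Fin (n + 1)) k :=
  ∑ A ∈ f.support,
    monomial (Finsupp.cons (f.totalDegree - A.sum fun _ e => e) A) (f.coeff A)

lemma Finsupp.degree_cons {n : ℕ} (t : ℕ) (A : Fin n →₀ ℕ) :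
    (Finsupp.cons t A).degree = t + A.degree := by
  have h : ∀ {m : ℕ} (d : Fin m →₀ ℕ), d.degree = ∑ i : Fin m, d i := by
    intro m d
    rw [Finsupp.degree]
    exact Finset.sum_subset (Finset.subset_univ _)
      (fun i _ hi => Finsupp.notMem_support_iff.mp hi)
  rw [h, h, Fin.sum_univ_succ, Finsupp.cons_zero]
  simp [Finsupp.cons_succ]

lemma Finsupp.sum_id_eq_degree {n : ℕ} (A : Fin n →₀ ℕ) :
    (A.sum fun _ e => e) = A.degree := rfl

/-- dehomogenization -/
def dehom {k : Type*} [Field k] {n : ℕ} :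
    MvPolynomial (Fin (n + 1)) k →ₐ[k] MvPolynomial (Fin n) k :=
  aeval (Fin.cases 1 X)

lemma dehom_monomial {k : Type*} [Field k] {n : ℕ} (e : Fin (n+1) →₀ ℕ) (c : k) :
    dehom (monomial e c) = monomial (Finsupp.tail e) c := by
  rw [dehom, aeval_monomial]
  rw [Finsupp.prod_fintype _ _ (fun i => pow_zero _), Fin.prod_univ_succ]
  simp only [Fin.cases_zero, one_pow, one_mul, Fin.cases_succ]
  rw [monomial_eq, Finsupp.prod_fintype _ _ (fun i => pow_zero _)]
  simp [algebraMap_eq, Finsupp.tail_apply]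

lemma dehom_homogenize {k : Type*} [Field k] {n : ℕ} (g : MvPolynomial (Fin n) k) :
    dehom (homogenize g) = g := by
  rw [homogenize, map_sum]
  conv_rhs => rw [g.as_sum]
  exact Finset.sum_congr rfl fun A _ => by rw [dehom_monomial, Finsupp.tail_cons]

lemma homogenize_isHomogeneous {k : Type*} [Field k] {n : ℕ} (g : MvPolynomial (Fin n) k) :
    (homogenize g).IsHomogeneous g.totalDegree := by
  apply IsHomogeneous.sum
  intro A hA
  apply isHomogeneous_monomial
  rw [Finsupp.degree_cons, Finsupp.sum_id_eq_degree]
  have : A.degree ≤ g.totalDegree := le_totalDegree hA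
  omega

lemma dehom_totalDegree_le {k : Type*} [Field k] {n : ℕ} (p : MvPolynomial (Fin (n+1)) k) :
    (dehom p).totalDegree ≤ p.totalDegree := by
  conv_lhs => rw [p.as_sum, map_sum]
  refine (totalDegree_finset_sum _ _).trans (Finset.sup_le fun e he => ?_)
  rw [dehom_monomial]
  refine (totalDegree_monomial_le _ _).trans ?_
  refine le_trans ?_ (le_totalDegree he)
  show (Finsupp.tail e).degree ≤ e.degree
  rw [Finsupp.degree, Finsupp.degree]
  calc ∑ i ∈ (Finsupp.tail e).support, Finsupp.tail e i
      = ∑ i ∈ (Finsupp.tail e).support.image Fin.succ, e i := by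
        rw [Finset.sum_image (fun a _ b _ h => Fin.succ_injective _ h)]
        rfl
    _ ≤ ∑ i ∈ e.support, e i := by
        apply Finset.sum_le_sum_of_subset
        intro i hi
        simp only [Finset.mem_image, Finsupp.mem_support_iff] at hi ⊢
        obtain ⟨a, ha, rfl⟩ := hi
        exact ha

lemma homogeneousComponent_mul_homogeneous {k : Type*} [Field k] {n N d : ℕ}
    (h : MvPolynomial (Fin n) k) (hp : h.IsHomogeneous d)
    (b : MvPolynomial (Fin n) k) :
    homogeneousComponent N (b * h) =
      if d ≤ N then homogeneousComponent (N - d) b * h else 0 := by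
  induction b using MvPolynomial.induction_on' with
  | monomial u c =>
    have hm : (monomial u c * h).IsHomogeneous (u.degree + d) :=
      (isHomogeneous_monomial c rfl).mul hp
    rw [homogeneousComponent_of_mem hm,
      homogeneousComponent_of_mem (p := monomial u c) (isHomogeneous_monomial c rfl)]
    by_cases hd : d ≤ N
    · rw [if_pos hd]
      by_cases he : N = u.degree + d
      · rw [if_pos he, if_pos (by omega)]
      · rw [if_neg he, if_neg (by omega), zero_mul]
    · rw [if_neg hd, if_neg (by omega)]
  | add p q hp' hq' =>
    rw [add_mul, map_add, hp', hq', map_add, add_mul]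
    split <;> simp

/-- **Degree-bounded ideal membership from multiplicity at infinity.**  Let
`I^A = (f_1, …, f_r) ⊆ k[x_1, …, x_n]`, let `I^H ⊆ k[x_0, …, x_n]` be generated by the
homogenizations `f_i^h`, and let `g ∈ I^A`.  If `m ≥ 0` satisfies `x_0^m · g^h ∈ I^H`,
then `g = Σ a_i f_i` with `deg a_i ≤ m + deg g` for every `i`. -/
theorem ideal_membership_degree_bound {k : Type*} [Field k] {n r : ℕ}
    (f : Fin r → MvPolynomial (Fin n) k) (g : MvPolynomial (Fin n) k) (m : ℕ)
    (hg : g ∈ Ideal.span (Set.range f))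
    (hh : (X 0 : MvPolynomial (Fin (n + 1)) k) ^ m * homogenize g
      ∈ Ideal.span (Set.range fun i => homogenize (f i))) :
    ∃ a : Fin r → MvPolynomial (Fin n) k,
      g = ∑ i, a i * f i ∧ ∀ i, (a i).totalDegree ≤ m + g.totalDegree := by
  set N := m + g.totalDegree with hN
  obtain ⟨b, hb⟩ := (Submodule.mem_span_range_iff_exists_fun _).mp hh
  -- LHS is homogeneous of degree N
  have hL : ((X 0 : MvPolynomial (Fin (n + 1)) k) ^ m * homogenize g).IsHomogeneous N := by
    simpa [hN] using ((isHomogeneous_X k (0 : Fin (n+1))).pow m).mul (homogenize_isHomogeneous g)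
  set c : Fin r → MvPolynomial (Fin (n+1)) k := fun i =>
    if (f i).totalDegree ≤ N then homogeneousComponent (N - (f i).totalDegree) (b i) else 0
    with hc
  have key : (X 0 : MvPolynomial (Fin (n + 1)) k) ^ m * homogenize g
      = ∑ i, c i * homogenize (f i) := by
    have hLe : homogeneousComponent N ((X 0 : MvPolynomial (Fin (n + 1)) k) ^ m * homogenize g)
        = (X 0 : MvPolynomial (Fin (n + 1)) k) ^ m * homogenize g := by
      rw [homogeneousComponent_of_mem hL, if_pos rfl]
    conv_lhs => rw [← hLe]
    conv_lhs => rw [← hb]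
    rw [map_sum]
    refine Finset.sum_congr rfl fun i _ => ?_
    rw [smul_eq_mul,
      homogeneousComponent_mul_homogeneous _ (homogenize_isHomogeneous (f i)) (b i)]
    by_cases hdi : (f i).totalDegree ≤ N
    · rw [if_pos hdi, hc]
      simp only [if_pos hdi]
    · rw [if_neg hdi, hc]
      simp only [if_neg hdi, zero_mul]
  refine ⟨fun i => dehom (c i), ?_, ?_⟩
  · have := congrArg (dehom (k := k) (n := n)) key
    rw [map_mul, map_pow, map_sum, dehom_homogenize] at this
    have hX : dehom (X 0 : MvPolynomial (Fin (n + 1)) k) = 1 := by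
      rw [dehom, aeval_X, Fin.cases_zero]
    rw [hX, one_pow, one_mul] at this
    rw [this]
    exact Finset.sum_congr rfl fun i _ => by rw [map_mul, dehom_homogenize]
  · intro i
    refine (dehom_totalDegree_le _).trans ?_
    by_cases hdi : (f i).totalDegree ≤ N
    · rw [hc]
      simp only [if_pos hdi]
      exact ((homogeneousComponent_isHomogeneous _ _).totalDegree_le).trans (Nat.sub_le _ _)
    · rw [hc]
      simp only [if_neg hdi]
      simp
end
end
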